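/- Let S = {s₁,…,sₙ}, R a set of length-3 words over S ∪ S⁻¹, and for A ⊆ S let R_A be the set of relators in R all of whose letters come from A ∪ A⁻¹, and Φ_{R,A} the conjunction of φ_r over r ∈ R_A, where φ_r = (x_i^{ε_i} ∨ x_j^{ε_j} ∨ x_k^{ε_k}) ∧ (x_i^{−ε_i} ∨ x_j^{−ε_j} ∨ x_k^{−ε_k}) for r = s_i^{ε_i}s_j^{ε_j}s_k^{ε_k}. If q : Γ → Q is a surjective homomorphism onto a left-orderable group Q such that no element of A lies in the kernel of q∘ι, then Φ_{R,A} is satisfiable. -/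

import Mathlib

abbrev Rel3 (n : ℕ) := (Fin n × Bool) × (Fin n × Bool) × (Fin n × Bool)

def sgen {n : ℕ} (p : Fin n × Bool) : FreeGroup (Fin n) :=
  if p.2 then FreeGroup.of p.1 else (FreeGroup.of p.1)⁻¹

def word3 {n : ℕ} (r : Rel3 n) : FreeGroup (Fin n) :=
  sgen r.1 * sgen r.2.1 * sgen r.2.2

/-- The value of the literal `x_i^{ε}` (`x^1 = x`, `x^{-1} = ¬x`) under `η`. -/
def lit {n : ℕ} (η : Fin n → Bool) (p : Fin n × Bool) : Bool :=
  η p.1 == p.2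

def satPhi {n : ℕ} (η : Fin n → Bool) (r : Rel3 n) : Bool :=
  (lit η r.1 || lit η r.2.1 || lit η r.2.2) &&
    (!lit η r.1 || !lit η r.2.1 || !lit η r.2.2)

/-!
Send each generator to `true` exactly when its image in `Q` is positive. For a generator of `A` the
image is not `1`, so a literal `x_i^{ε}` is then true exactly when the image of `s_i^{ε}` is
positive. A relator of `R_A` maps to `1`, but in a left-ordered group a product of three positive
(or of three negative) elements is positive (negative), so both clauses of `φ_r` hold.
-/

section LeftOrdered

variable {G : Type*} [Group G] [LinearOrder G] [MulLeftMono G]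

lemma one_lt_mul_mul {a b c : G} (ha : 1 < a) (hb : 1 < b) (hc : 1 < c) : 1 < a * b * c :=
  Left.one_lt_mul' (Left.one_lt_mul' ha hb) hc

lemma mul_mul_lt_one {a b c : G} (ha : a < 1) (hb : b < 1) (hc : c < 1) : a * b * c < 1 :=
  Left.mul_lt_one' (Left.mul_lt_one' ha hb) hc

def signAssignment {n : ℕ} (f : FreeGroup (Fin n) →* G) : Fin n → Bool :=
  fun i => decide (1 < f (FreeGroup.of i))

lemma lit_signAssignment {n : ℕ} (f : FreeGroup (Fin n) →* G) {p : Fin n × Bool}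
    (hp : f (FreeGroup.of p.1) ≠ 1) : lit (signAssignment f) p = decide (1 < f (sgen p)) := by
  obtain ⟨i, _ | _⟩ := p
  · have hp : f (FreeGroup.of i) ≠ 1 := hp
    simp [lit, signAssignment, sgen, ← decide_not, hp.le_iff_lt]
  · simp [lit, signAssignment, sgen]

lemma satPhi_signAssignment {n : ℕ} (f : FreeGroup (Fin n) →* G) {r : Rel3 n}
    (hr : f (word3 r) = 1) (h₁ : f (FreeGroup.of r.1.1) ≠ 1) (h₂ : f (FreeGroup.of r.2.1.1) ≠ 1)
    (h₃ : f (FreeGroup.of r.2.2.1) ≠ 1) : satPhi (signAssignment f) r = true := by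
  have hr' : f (sgen r.1) * f (sgen r.2.1) * f (sgen r.2.2) = 1 := by
    simpa only [word3, map_mul] using hr
  have hne : ∀ p : Fin n × Bool, f (FreeGroup.of p.1) ≠ 1 → f (sgen p) ≠ 1 := by
    rintro ⟨i, _ | _⟩ h <;> simpa [sgen] using h
  simp only [satPhi, lit_signAssignment f h₁, lit_signAssignment f h₂, lit_signAssignment f h₃,
    Bool.and_eq_true, Bool.or_eq_true, Bool.not_eq_true', decide_eq_true_eq, decide_eq_false_iff_not]
  constructor
  · by_contra! h
    obtain ⟨⟨ha, hb⟩, hc⟩ := h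
    exact (mul_mul_lt_one (ha.lt_of_ne (hne _ h₁)) (hb.lt_of_ne (hne _ h₂))
      (hc.lt_of_ne (hne _ h₃))).ne hr'
  · by_contra! h
    obtain ⟨⟨ha, hb⟩, hc⟩ := h
    exact (one_lt_mul_mul ha hb hc).ne' hr'

end LeftOrdered

theorem stmt_4_general {n : ℕ} (R : Set (Rel3 n)) (A : Set (Fin n))
    {Q : Type*} [Group Q]
    (q : PresentedGroup (word3 '' R) →* Q)
    (hLO : ∃ lo : LinearOrder Q, ∀ a b g : Q, lo.le a b → lo.le (g * a) (g * b))
    (hker : ∀ i ∈ A, q (PresentedGroup.of i) ≠ 1) :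
    ∃ η : Fin n → Bool, ∀ r ∈ R,
      r.1.1 ∈ A → r.2.1.1 ∈ A → r.2.2.1 ∈ A → satPhi η r = true := by
  obtain ⟨lo, hmul⟩ := hLO
  let := lo
  have : MulLeftMono Q := ⟨fun g _ _ h => hmul _ _ g h⟩
  let f := q.comp (PresentedGroup.mk (word3 '' R))
  refine ⟨signAssignment f, fun r hr h₁ h₂ h₃ => satPhi_signAssignment f ?_ (hker _ h₁)
    (hker _ h₂) (hker _ h₃)⟩
  simp [f, PresentedGroup.one_of_mem (Set.mem_image_of_mem word3 hr)]

/-- If `q : Γ ↠ Q` is an epimorphism onto a left-orderable group `Q` with no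
generator from `A` in the kernel of `q ∘ ι`, then `Φ_{R,A}` is satisfiable. -/
theorem stmt_4 {n : ℕ} (R : Set (Rel3 n)) (A : Set (Fin n))
    {Q : Type*} [Group Q]
    (q : PresentedGroup (word3 '' R) →* Q) (hsurj : Function.Surjective q)
    (hLO : ∃ lo : LinearOrder Q, ∀ a b g : Q, lo.le a b → lo.le (g * a) (g * b))
    (hker : ∀ i ∈ A, q (PresentedGroup.of i) ≠ 1) :
    ∃ η : Fin n → Bool, ∀ r ∈ R,
      r.1.1 ∈ A → r.2.1.1 ∈ A → r.2.2.1 ∈ A → satPhi η r = true :=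
  stmt_4_general R A q hLO hker
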